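/- arXiv:1711.01944 — 10 statements merged into one kernel-verified Lean document; each statement's English description precedes it below -/
import Mathlib

section
/- Let f : ℝ^d → ℝ be twice differentiable with L₂-Lipschitz continuous Hessian, x a point with ‖∇f(x)‖ ≤ ε and v a unit vector with vᵀ∇²f(x)v ≤ -cγ for some c, γ > 0. Define x₊ = x - (cγ/L₂)·sign(vᵀ∇f(x))·v. Then f(x) - f(x₊) ≥ c³γ³/(3L₂²). -/
open scoped RealInnerProductSpace

/-! Along a unit direction `v` of curvature at most `-μ`, the cubic upper model of `f` at `x`
decreases by `μ t² / 2 - L₂ |t|³ / 6` under the step `t • v`, provided the step does not go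
uphill to first order; at step length `μ / L₂` this gain is `μ³ / (3 L₂²)`.
Choosing the sign of the step against `⟪∇f(x), v⟫` kills the first-order term. -/

section

variable {E : Type*} [NormedAddCommGroup E] [InnerProductSpace ℝ E]

theorem sub_le_of_cubic_model_of_neg_curvature (f : E → ℝ) (g : E) (H : E →L[ℝ] E)
    (L₂ μ t : ℝ) (x v : E) (hv : ‖v‖ = 1)
    (hmodel : f (x + t • v) - f x - ⟪g, t • v⟫ - 1 / 2 * ⟪H (t • v), t • v⟫
      ≤ L₂ / 6 * ‖t • v‖ ^ 3)
    (hdescent : t * ⟪g, v⟫ ≤ 0) (hcurv : ⟪H v, v⟫ ≤ -μ) :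
    μ * t ^ 2 / 2 - L₂ * |t| ^ 3 / 6 ≤ f x - f (x + t • v) := by
  have hquad : ⟪H (t • v), t • v⟫ = t ^ 2 * ⟪H v, v⟫ := by
    rw [map_smul, real_inner_smul_left, real_inner_smul_right]; ring
  rw [real_inner_smul_right, hquad, norm_smul, hv, mul_one, Real.norm_eq_abs] at hmodel
  nlinarith [mul_le_mul_of_nonneg_left hcurv (sq_nonneg t)]

end

theorem abs_ite_one_neg_one (p : Prop) [Decidable p] : |(if p then 1 else -1 : ℝ)| = 1 := by
  split_ifs <;> simp

theorem ite_nonneg_one_neg_one_mul_self_nonneg (a : ℝ) :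
    0 ≤ (if 0 ≤ a then 1 else -1) * a := by
  split_ifs with ha
  · simpa using ha
  · linarith [not_le.mp ha]

theorem neg_curvature_step_decrease_general {d : ℕ}
    (f : EuclideanSpace ℝ (Fin d) → ℝ)
    (g : EuclideanSpace ℝ (Fin d) → EuclideanSpace ℝ (Fin d))
    (H : EuclideanSpace ℝ (Fin d) → EuclideanSpace ℝ (Fin d) →L[ℝ] EuclideanSpace ℝ (Fin d))
    (L₂ c γ : ℝ) (hL₂ : 0 < L₂) (hc : 0 < c) (hγ : 0 < γ)
    (hTaylor : ∀ x y : EuclideanSpace ℝ (Fin d),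
      abs (f x - f y - ⟪g y, x - y⟫ - (1 / 2) * ⟪H y (x - y), x - y⟫)
        ≤ L₂ / 6 * ‖x - y‖ ^ 3)
    (x v : EuclideanSpace ℝ (Fin d)) (hv : ‖v‖ = 1)
    (hnc : ⟪H x v, v⟫ ≤ -(c * γ))
    (xp : EuclideanSpace ℝ (Fin d))
    (hxp : xp = x - ((c * γ / L₂) * (if 0 ≤ ⟪g x, v⟫ then 1 else -1)) • v) :
    f x - f xp ≥ c ^ 3 * γ ^ 3 / (3 * L₂ ^ 2) := by
  set s : ℝ := if 0 ≤ ⟪g x, v⟫ then 1 else -1 with hs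
  set t : ℝ := -(c * γ / L₂ * s)
  have hstep : xp = x + t • v := by rw [hxp, neg_smul, ← sub_eq_add_neg]
  have ht : |t| = c * γ / L₂ := by
    rw [abs_neg, abs_mul, hs, abs_ite_one_neg_one, mul_one, abs_of_pos (by positivity)]
  have hdescent : t * ⟪g x, v⟫ ≤ 0 := by
    have := mul_nonneg (by positivity : 0 ≤ c * γ / L₂)
      (ite_nonneg_one_neg_one_mul_self_nonneg ⟪g x, v⟫)
    linarith
  have hmodel := (abs_le.mp (hTaylor xp x)).2
  rw [hstep, add_sub_cancel_left] at hmodel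
  have hgain := sub_le_of_cubic_model_of_neg_curvature f (g x) (H x) L₂ (c * γ) t x v hv
    hmodel hdescent hnc
  rw [← sq_abs t, ht] at hgain
  rw [hstep]
  calc f x - f (x + t • v) ≥ c * γ * (c * γ / L₂) ^ 2 / 2 - L₂ * (c * γ / L₂) ^ 3 / 6 := hgain
    _ = c ^ 3 * γ ^ 3 / (3 * L₂ ^ 2) := by field_simp; ring

/-- Negative-curvature descent step decreases the objective by
`c³γ³/(3L₂²)`. -/
theorem neg_curvature_step_decrease {d : ℕ}
    (f : EuclideanSpace ℝ (Fin d) → ℝ)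
    (g : EuclideanSpace ℝ (Fin d) → EuclideanSpace ℝ (Fin d))
    (H : EuclideanSpace ℝ (Fin d) → EuclideanSpace ℝ (Fin d) →L[ℝ] EuclideanSpace ℝ (Fin d))
    (L₂ c γ ε : ℝ) (hL₂ : 0 < L₂) (hc : 0 < c) (hγ : 0 < γ)
    (hgrad : ∀ x, HasGradientAt f (g x) x)
    (hTaylor : ∀ x y : EuclideanSpace ℝ (Fin d),
      abs (f x - f y - ⟪g y, x - y⟫ - (1 / 2) * ⟪H y (x - y), x - y⟫)
        ≤ L₂ / 6 * ‖x - y‖ ^ 3)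
    (x v : EuclideanSpace ℝ (Fin d)) (hv : ‖v‖ = 1)
    (hsmallgrad : ‖g x‖ ≤ ε)
    (hnc : ⟪H x v, v⟫ ≤ -(c * γ))
    (xp : EuclideanSpace ℝ (Fin d))
    (hxp : xp = x - ((c * γ / L₂) * (if 0 ≤ ⟪g x, v⟫ then 1 else -1)) • v) :
    f x - f xp ≥ c ^ 3 * γ ^ 3 / (3 * L₂ ^ 2) :=
  neg_curvature_step_decrease_general f g H L₂ c γ hL₂ hc hγ hTaylor x v hv hnc xp hxp
end

section
/- Let f : ℝ^d → ℝ be twice differentiable with L₂-Lipschitz continuous Hessian, and let x, u ∈ ℝ^d, F > 0, U > 0 with f(x+u) - f(x) - ∇f(x)ᵀu ≤ -2F, ‖u‖ ≤ U, and (L₂/6)U³ ≤ F. Then uᵀ∇²f(x)u / ‖u‖² ≤ -2F/U². -/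
open scoped RealInnerProductSpace

/-- If `f̂(u) ≤ -2F`, `‖u‖ ≤ U` and `(L₂/6)U³ ≤ F`, then the Rayleigh
quotient of the Hessian at `u` is at most `-2F/U²`. -/
theorem rayleigh_quotient_of_fhat_decrease {d : ℕ}
    (f : EuclideanSpace ℝ (Fin d) → ℝ)
    (g : EuclideanSpace ℝ (Fin d) → EuclideanSpace ℝ (Fin d))
    (H : EuclideanSpace ℝ (Fin d) → EuclideanSpace ℝ (Fin d) →L[ℝ] EuclideanSpace ℝ (Fin d))
    (L₂ F U : ℝ) (hL₂ : 0 < L₂) (hF : 0 < F) (hU : 0 < U)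
    (hgrad : ∀ x, HasGradientAt f (g x) x)
    (hTaylor : ∀ x u : EuclideanSpace ℝ (Fin d),
      abs (f (x + u) - f x - ⟪g x, u⟫ - (1 / 2) * ⟪H x u, u⟫) ≤ L₂ / 6 * ‖u‖ ^ 3)
    (x u : EuclideanSpace ℝ (Fin d)) (hu : u ≠ 0)
    (hdec : f (x + u) - f x - ⟪g x, u⟫ ≤ -2 * F)
    (hnorm : ‖u‖ ≤ U)
    (hUF : L₂ / 6 * U ^ 3 ≤ F) :
    ⟪H x u, u⟫ / ‖u‖ ^ 2 ≤ -2 * F / U ^ 2 := by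
  have hT := hTaylor x u
  have hcube : L₂ / 6 * ‖u‖ ^ 3 ≤ F := by
    refine le_trans ?_ hUF
    have h3 : ‖u‖ ^ 3 ≤ U ^ 3 := pow_le_pow_left₀ (norm_nonneg u) hnorm 3
    nlinarith
  have habs := abs_le.mp hT
  have hquad : ⟪H x u, u⟫ ≤ -2 * F := by nlinarith [habs.1]
  have hnu : (0:ℝ) < ‖u‖ := norm_pos_iff.mpr hu
  have hnu2 : (0:ℝ) < ‖u‖ ^ 2 := by positivity
  have hU2 : (0:ℝ) < U ^ 2 := by positivity
  have hle : ‖u‖ ^ 2 ≤ U ^ 2 := pow_le_pow_left₀ (norm_nonneg u) hnorm 2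
  rw [div_le_div_iff₀ hnu2 hU2]
  nlinarith [mul_le_mul_of_nonneg_right hquad (le_of_lt hU2)]
end

section
/- For every real x ≥ 0, Γ(x+1)/Γ(x+1/2) ≤ √(x + 1/2), where Γ is the Gamma function. -/
/-- Gamma-ratio inequality `Γ(x+1)/Γ(x+1/2) ≤ √(x+1/2)` for `x ≥ 0`. -/
theorem gamma_ratio_le_sqrt (x : ℝ) (hx : 0 ≤ x) :
    Real.Gamma (x + 1) / Real.Gamma (x + 1 / 2) ≤ Real.sqrt (x + 1 / 2) := by
  have h2 : (0:ℝ) < x + 1/2 := by linarith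
  have h3 : (0:ℝ) < x + 3/2 := by linarith
  have hG2 : 0 < Real.Gamma (x + 1/2) := Real.Gamma_pos_of_pos h2
  have hG3 : 0 < Real.Gamma (x + 3/2) := Real.Gamma_pos_of_pos h3
  have key := Real.Gamma_mul_add_mul_le_rpow_Gamma_mul_rpow_Gamma h2 h3
    (by norm_num : (0:ℝ) < 1/2) (by norm_num : (0:ℝ) < 1/2) (by norm_num)
  have harg : (1/2 : ℝ) * (x + 1/2) + (1/2) * (x + 3/2) = x + 1 := by ring
  rw [harg] at key
  have hrec : Real.Gamma (x + 3/2) = (x + 1/2) * Real.Gamma (x + 1/2) := by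
    have := Real.Gamma_add_one (by positivity : x + 1/2 ≠ 0)
    rw [show x + 1/2 + 1 = x + 3/2 by ring] at this
    exact this
  have hbound : Real.Gamma (x + 1) ≤ Real.sqrt (x + 1/2) * Real.Gamma (x + 1/2) := by
    calc Real.Gamma (x + 1)
        ≤ Real.Gamma (x + 1/2) ^ (1/2:ℝ) * Real.Gamma (x + 3/2) ^ (1/2:ℝ) := key
      _ = Real.sqrt (x + 1/2) * Real.Gamma (x + 1/2) := by
          rw [hrec, Real.mul_rpow h2.le hG2.le, Real.sqrt_eq_rpow]
          rw [show Real.Gamma (x+1/2) ^ (1/2:ℝ) * ((x+1/2) ^ (1/2:ℝ) *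
              Real.Gamma (x+1/2) ^ (1/2:ℝ)) = (x+1/2) ^ (1/2:ℝ) *
              (Real.Gamma (x+1/2) ^ (1/2:ℝ) * Real.Gamma (x+1/2) ^ (1/2:ℝ)) by ring,
            ← Real.rpow_add hG2]
          norm_num
  rw [div_le_iff₀ hG2]
  exact hbound
end

section
/- Let X_s be a measurable subset of the d-dimensional Euclidean ball B(r) of radius r centered at the origin, and let e be a unit vector. Suppose that for every u ∈ X_s and every μ ∈ [δ/(2√d), 1], the points u + μr·e and u - μr·e are not in X_s. Then Vol(X_s) ≤ 2·(δ/(2√d))·r·Vol(B^{(d-1)}(r)), where B^{(d-1)}(r) is the (d-1)-dimensional ball of radius r. -/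
open MeasureTheory

/-- Volume of the Euclidean ball of radius `r` in `ℝ^d`:
`π^{d/2} r^d / Γ(d/2 + 1)`. -/
noncomputable def euclideanBallVol (d : ℕ) (r : ℝ) : ℝ :=
  Real.pi ^ ((d : ℝ) / 2) * r ^ d / Real.Gamma ((d : ℝ) / 2 + 1)

/-!
In orthonormal coordinates with first axis `e`, `ℝ^d ≃ ℝ × ℝ^(d-1)` preserves volume and a shift
along `e` moves only the first coordinate. Every line parallel to `e` then meets `X_s` in a subset
of an interval of length `2r` containing no two points at distance in `[c₀, r]`, where
`c₀ = δ r / (2√d)`. Such a set lies in two intervals of length `c₀`: one starting at its infimum,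
the other at the infimum of its part beyond the first gap. The lines meeting `X_s` pass through
the `(d-1)`-ball of radius `r`, so Fubini gives the bound.
-/

open Set

namespace Real

theorem subset_Icc_union_Ioi_sInf_of_add_notMem {A : Set ℝ} (hA : BddBelow A) {c₀ L : ℝ}
    (hgap : ∀ t ∈ A, ∀ c ∈ Icc c₀ L, t + c ∉ A) :
    A ⊆ Icc (sInf A) (sInf A + c₀) ∪ Ioi (sInf A + L) := by
  intro t ht
  by_contra hout
  simp only [mem_union, mem_Icc, mem_Ioi, csInf_le hA ht, true_and, not_or, not_le,
    not_lt] at hout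
  obtain ⟨a, haA, hat⟩ := exists_lt_of_csInf_lt ⟨t, ht⟩ (lt_sub_iff_add_lt.2 hout.1)
  have hle : sInf A ≤ a := csInf_le hA haA
  exact hgap a haA (t - a) ⟨by linarith, by linarith⟩ (by rwa [add_sub_cancel])

theorem volume_le_of_add_notMem {A : Set ℝ} {r c₀ : ℝ} (hA : A ⊆ Icc (-r) r)
    (hgap : ∀ t ∈ A, ∀ c ∈ Icc c₀ r, t + c ∉ A) :
    volume A ≤ ENNReal.ofReal (2 * c₀) := by
  set A' := A ∩ Ioi (sInf A + r)
  have hbdd : BddBelow A := ⟨-r, fun t ht ↦ (hA ht).1⟩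
  have hA' : A' ⊆ Icc (sInf A') (sInf A' + c₀) ∪ Ioi (sInf A' + r) :=
    subset_Icc_union_Ioi_sInf_of_add_notMem (hbdd.mono inter_subset_left)
      fun t ht c hc htc ↦ hgap t ht.1 c hc htc.1
  have hcover : A ⊆ Icc (sInf A) (sInf A + c₀) ∪ Icc (sInf A') (sInf A' + c₀) := by
    intro t ht
    refine (subset_Icc_union_Ioi_sInf_of_add_notMem hbdd hgap ht).imp id fun hgt ↦ ?_
    refine (hA' ⟨ht, hgt⟩).resolve_right fun hgt' ↦ ?_
    -- two gaps of length `r` above `sInf A ≥ -r` would push `t` beyond `r`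
    have : sInf A + r ≤ sInf A' := le_csInf ⟨t, ht, hgt⟩ fun s hs ↦ hs.2.le
    have : -r ≤ sInf A := le_csInf ⟨t, ht⟩ fun s hs ↦ (hA hs).1
    linarith [(hA ht).2, mem_Ioi.1 hgt']
  calc volume A ≤ volume (Icc (sInf A) (sInf A + c₀) ∪ Icc (sInf A') (sInf A' + c₀)) :=
        measure_mono hcover
    _ ≤ ENNReal.ofReal c₀ + ENNReal.ofReal c₀ := by
        refine (measure_union_le _ _).trans_eq ?_
        simp only [Real.volume_Icc, add_sub_cancel_left]
    _ = ENNReal.ofReal (2 * c₀) := by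
        rw [ENNReal.ofReal_mul zero_le_two, ENNReal.ofReal_ofNat, two_mul]

end Real

open scoped ENNReal in
theorem MeasureTheory.Measure.prod_apply_le_mul_of_slice_le {α β : Type*} [MeasurableSpace α]
    [MeasurableSpace β] {μ : Measure α} {ν : Measure β} [SFinite μ] [SFinite ν]
    {Y : Set (α × β)} (hY : MeasurableSet Y) {S : Set β} {C : ℝ≥0∞}
    (hYS : ∀ p ∈ Y, p.2 ∈ S) (hslice : ∀ y ∈ S, μ ((·, y) ⁻¹' Y) ≤ C) :
    μ.prod ν Y ≤ C * ν S := by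
  rw [Measure.prod_apply_symm hY]
  refine (lintegral_mono fun y ↦ ?_).trans (lintegral_indicator_const_le S C)
  by_cases hy : y ∈ S
  · simpa [hy] using hslice y hy
  · have : (·, y) ⁻¹' Y = ∅ := eq_empty_of_forall_notMem fun t ht ↦ hy (hYS _ ht)
    simp [this]

namespace EuclideanSpace

theorem exists_measurePreserving_prod_of_norm_eq_one {m : ℕ}
    {e : EuclideanSpace ℝ (Fin (m + 1))} (he : ‖e‖ = 1) :
    ∃ Φ : EuclideanSpace ℝ (Fin (m + 1)) ≃ᵐ ℝ × EuclideanSpace ℝ (Fin m),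
      MeasurePreserving Φ ∧ (∀ u (c : ℝ), Φ (u + c • e) = ((Φ u).1 + c, (Φ u).2)) ∧
      ∀ u, ‖u‖ ^ 2 = (Φ u).1 ^ 2 + ‖(Φ u).2‖ ^ 2 := by
  have horth : Orthonormal ℝ (({0} : Set (Fin (m + 1))).domRestrict fun _ ↦ e) := by
    rw [orthonormal_iff_ite]
    rintro ⟨i, rfl⟩ ⟨j, rfl⟩
    simp [Set.domRestrict, he]
  obtain ⟨b, hb⟩ := horth.exists_orthonormalBasis_extension_of_card_eq
    (by simp [finrank_euclideanSpace])
  let Φ := b.repr.toHomeomorph.toMeasurableEquiv.trans <|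
    (MeasurableEquiv.toLp 2 (Fin (m + 1) → ℝ)).symm.trans <|
    (MeasurableEquiv.piFinSuccAbove (fun _ ↦ ℝ) 0).trans <|
    MeasurableEquiv.prodCongr (MeasurableEquiv.refl ℝ) (MeasurableEquiv.toLp 2 (Fin m → ℝ))
  have hΦ : ∀ u, Φ u = (b.repr u 0, WithLp.toLp 2 fun j ↦ b.repr u j.succ) := fun u ↦ rfl
  refine ⟨Φ, ?_, fun u c ↦ ?_, fun u ↦ ?_⟩
  · exact (MeasurePreserving.id volume |>.prod (PiLp.volume_preserving_toLp (Fin m))).comp <|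
      (volume_preserving_piFinSuccAbove (fun _ ↦ ℝ) 0).comp <|
      (volume_preserving_symm_measurableEquiv_toLp (Fin (m + 1))).comp b.measurePreserving_repr
  · have hrepr : b.repr (u + c • e) = b.repr u + c • EuclideanSpace.single 0 1 := by
      rw [map_add, map_smul, ← hb 0 rfl, b.repr_self]
    simp [hΦ, hrepr, Fin.succ_ne_zero]
  · rw [hΦ, ← b.repr.norm_map, EuclideanSpace.norm_sq_eq, EuclideanSpace.norm_sq_eq,
      Fin.sum_univ_succ]
    simp

theorem volume_le_of_add_smul_notMem {m : ℕ} {e : EuclideanSpace ℝ (Fin (m + 1))}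
    (he : ‖e‖ = 1) {X : Set (EuclideanSpace ℝ (Fin (m + 1)))} (hX : MeasurableSet X) {r c₀ : ℝ}
    (hXr : X ⊆ Metric.closedBall 0 r) (hgap : ∀ u ∈ X, ∀ c ∈ Icc c₀ r, u + c • e ∉ X) :
    volume X ≤
      ENNReal.ofReal (2 * c₀) * volume (Metric.closedBall (0 : EuclideanSpace ℝ (Fin m)) r) := by
  obtain ⟨Φ, hΦ, hshift, hnorm⟩ := exists_measurePreserving_prod_of_norm_eq_one he
  have hbound : ∀ p ∈ Φ.symm ⁻¹' X, |p.1| ≤ r ∧ ‖p.2‖ ≤ r := by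
    intro p hp
    have hu : ‖Φ.symm p‖ ≤ r := mem_closedBall_zero_iff.1 (hXr hp)
    have hr : 0 ≤ r := (norm_nonneg _).trans hu
    have hsq : p.1 ^ 2 + ‖p.2‖ ^ 2 ≤ r ^ 2 := by
      simpa [hnorm] using pow_le_pow_left₀ (norm_nonneg _) hu 2
    exact ⟨abs_le_of_sq_le_sq (by linarith [sq_nonneg ‖p.2‖]) hr,
      (sq_le_sq₀ (norm_nonneg _) hr).1 (by linarith [sq_nonneg p.1])⟩
  rw [← hΦ.symm.measure_preimage_equiv X, Measure.volume_eq_prod]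
  refine Measure.prod_apply_le_mul_of_slice_le (hX.preimage Φ.symm.measurable)
    (fun p hp ↦ mem_closedBall_zero_iff.2 (hbound p hp).2) fun y _ ↦ ?_
  refine Real.volume_le_of_add_notMem (fun t ht ↦ abs_le.1 (hbound _ ht).1) fun t ht c hc htc ↦ ?_
  have : Φ.symm (t + c, y) = Φ.symm (t, y) + c • e :=
    Φ.injective (by simp [hshift])
  exact hgap _ ht c hc (by simpa [this] using htc)

theorem volume_closedBall_toReal (m : ℕ) (x : EuclideanSpace ℝ (Fin m)) {r : ℝ} (hr : 0 ≤ r) :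
    (volume (Metric.closedBall x r)).toReal = euclideanBallVol m r := by
  rcases Nat.eq_zero_or_pos m with rfl | hm
  · have : Metric.closedBall x r = univ :=
      eq_univ_of_forall fun y ↦ by simp [Subsingleton.elim y x, hr]
    simp [this, volume_euclideanSpace_eq_dirac, euclideanBallVol]
  have : Nonempty (Fin m) := ⟨⟨0, hm⟩⟩
  rw [volume_closedBall, Fintype.card_fin, ENNReal.toReal_mul, ENNReal.toReal_pow,
    ENNReal.toReal_ofReal hr, ENNReal.toReal_ofReal (by positivity), euclideanBallVol,
    Real.sqrt_eq_rpow, ← Real.rpow_mul_natCast Real.pi_pos.le]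
  ring_nf

end EuclideanSpace

theorem bad_set_volume_bound_general {d : ℕ} (r δ : ℝ) (hr : 0 < r)
    (hδ : δ ∈ Set.Ioo (0 : ℝ) 1)
    (e : EuclideanSpace ℝ (Fin d)) (he : ‖e‖ = 1)
    (Xs : Set (EuclideanSpace ℝ (Fin d))) (hXmeas : MeasurableSet Xs)
    (hXsub : Xs ⊆ Metric.closedBall 0 r)
    (hescape : ∀ u ∈ Xs, ∀ μ ∈ Set.Icc (δ / (2 * Real.sqrt d)) 1,
      u + (μ * r) • e ∉ Xs ∧ u - (μ * r) • e ∉ Xs) :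
    (volume Xs).toReal ≤ 2 * (δ / (2 * Real.sqrt d)) * r * euclideanBallVol (d - 1) r := by
  obtain ⟨m, rfl⟩ : ∃ m, d = m + 1 :=
    Nat.exists_eq_succ_of_ne_zero fun hd ↦ by subst hd; simp [Subsingleton.elim e 0] at he
  set s := δ / (2 * Real.sqrt (m + 1 : ℕ))
  have hs : 0 < s := div_pos hδ.1 (by positivity)
  have hvol := EuclideanSpace.volume_le_of_add_smul_notMem he hXmeas hXsub (c₀ := s * r)
    fun u hu c hc ↦ by
      simpa [div_mul_cancel₀ c hr.ne'] using
        (hescape u hu (c / r) ⟨(le_div_iff₀ hr).2 hc.1, (div_le_one hr).2 hc.2⟩).1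
  rw [Nat.add_sub_cancel, ← EuclideanSpace.volume_closedBall_toReal m 0 hr.le, mul_assoc 2 s,
    ← ENNReal.toReal_ofReal (by positivity : 0 ≤ 2 * (s * r)), ← ENNReal.toReal_mul]
  exact ENNReal.toReal_mono
    (ENNReal.mul_ne_top ENNReal.ofReal_ne_top measure_closedBall_lt_top.ne) hvol

/-- If every point of `X_s` escapes from `X_s` when shifted by `±μr e`
for all `μ ∈ [δ/(2√d), 1]`, then the volume of `X_s` is at most
`2(δ/(2√d)) r · Vol(B^{(d-1)}(r))`. -/
theorem bad_set_volume_bound {d : ℕ} (hd : 1 ≤ d) (r δ : ℝ) (hr : 0 < r)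
    (hδ : δ ∈ Set.Ioo (0 : ℝ) 1)
    (e : EuclideanSpace ℝ (Fin d)) (he : ‖e‖ = 1)
    (Xs : Set (EuclideanSpace ℝ (Fin d))) (hXmeas : MeasurableSet Xs)
    (hXsub : Xs ⊆ Metric.closedBall 0 r)
    (hescape : ∀ u ∈ Xs, ∀ μ ∈ Set.Icc (δ / (2 * Real.sqrt d)) 1,
      u + (μ * r) • e ∉ Xs ∧ u - (μ * r) • e ∉ Xs) :
    (volume Xs).toReal ≤ 2 * (δ / (2 * Real.sqrt d)) * r * euclideanBallVol (d - 1) r :=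
  bad_set_volume_bound_general r δ hr hδ e he Xs hXmeas hXsub hescape
end

section
/- Let ψ_τ, φ_τ ≥ 0 be sequences satisfying ψ_{τ+1} ≥ (1+γη)ψ_τ - ζ√(ψ_τ² + φ_τ²) and φ_{τ+1} ≤ (1+γη)φ_τ + ζ√(ψ_τ² + φ_τ²) with φ_0 = 0, ψ_0 > 0, γη > 0, ζ > 0. If 4ζ(τ+1) ≤ 1 for all τ < T, then φ_τ ≤ 4ζτ·ψ_τ holds for all τ ≤ T. -/
set_option maxHeartbeats 1600000 in
/-- Induction bound `φ_τ ≤ 4ζτ·ψ_τ` for the coupled recursion driven by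
negative curvature. -/
theorem coupled_recursion_bound (ψ φ : ℕ → ℝ) (T : ℕ) (γ η ζ : ℝ)
    (hγη : 0 < γ * η) (hζ : 0 < ζ)
    (hψ : ∀ τ, 0 ≤ ψ τ) (hφ : ∀ τ, 0 ≤ φ τ)
    (hφ0 : φ 0 = 0) (hψ0 : 0 < ψ 0)
    (hrecψ : ∀ τ < T,
      ψ (τ + 1) ≥ (1 + γ * η) * ψ τ - ζ * Real.sqrt ((ψ τ) ^ 2 + (φ τ) ^ 2))
    (hrecφ : ∀ τ < T,
      φ (τ + 1) ≤ (1 + γ * η) * φ τ + ζ * Real.sqrt ((ψ τ) ^ 2 + (φ τ) ^ 2))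
    (hsmall : ∀ τ < T, 4 * ζ * (τ + 1 : ℝ) ≤ 1) :
    ∀ τ ≤ T, φ τ ≤ 4 * ζ * (τ : ℝ) * ψ τ := by
  intro τ
  induction τ with
  | zero => intro _; simp [hφ0]
  | succ n ih =>
    intro hle
    have hn : n < T := hle
    have ihn := ih (le_of_lt hn)
    have hsm := hsmall n hn
    have hnn : (0:ℝ) ≤ (n:ℝ) := Nat.cast_nonneg n
    have hsm' : 4 * ζ * (n:ℝ) ≤ 1 := by nlinarith
    have hφψ : φ n ≤ ψ n := by nlinarith [hψ n]
    have hs2 : Real.sqrt 2 ≤ 3/2 := by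
      nlinarith [Real.sq_sqrt (by norm_num : (2:ℝ) ≥ 0), Real.sqrt_nonneg 2]
    have hs2' : (1:ℝ) ≤ Real.sqrt 2 := by
      nlinarith [Real.sq_sqrt (by norm_num : (2:ℝ) ≥ 0), Real.sqrt_nonneg 2]
    have hs : Real.sqrt ((ψ n) ^ 2 + (φ n) ^ 2) ≤ Real.sqrt 2 * ψ n := by
      rw [show Real.sqrt 2 * ψ n = Real.sqrt (2 * (ψ n) ^ 2) by
        rw [Real.sqrt_mul (by norm_num), Real.sqrt_sq (hψ n)]]
      apply Real.sqrt_le_sqrt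
      nlinarith [hφ n, hψ n]
    have hsnn : 0 ≤ Real.sqrt ((ψ n) ^ 2 + (φ n) ^ 2) := Real.sqrt_nonneg _
    have h1 := hrecψ n hn
    have h2 := hrecφ n hn
    have hψ1nn : 0 ≤ ψ (n+1) := hψ (n+1)
    have hζs : ζ * Real.sqrt 2 ≤ 1/2 := by nlinarith
    -- lower bound for ψ (n+1)
    have hlow : ψ (n+1) ≥ (1 + γ * η - ζ * Real.sqrt 2) * ψ n := by
      nlinarith [hψ n]
    have hcoef : (0:ℝ) ≤ 1 + γ * η - ζ * Real.sqrt 2 := by nlinarith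
    have hkey : √2 * (1 + 4 * ζ * ((n:ℝ)+1)) ≤ 4 * (1 + γ * η) := by
      nlinarith
    have hA : φ (n+1) ≤ (1 + γ * η) * (4 * ζ * (n:ℝ) * ψ n) + ζ * (Real.sqrt 2 * ψ n) := by
      nlinarith [mul_le_mul_of_nonneg_left hs hζ.le]
    have hB : 4 * ζ * ((n:ℝ)+1) * ((1 + γ * η - ζ * Real.sqrt 2) * ψ n)
        ≤ 4 * ζ * ((n:ℝ)+1) * ψ (n+1) :=
      mul_le_mul_of_nonneg_left hlow (by positivity)
    have hC : (1 + γ * η) * (4 * ζ * (n:ℝ) * ψ n) + ζ * (Real.sqrt 2 * ψ n)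
        ≤ 4 * ζ * ((n:ℝ)+1) * ((1 + γ * η - ζ * Real.sqrt 2) * ψ n) := by
      have h := mul_le_mul_of_nonneg_left hkey (mul_nonneg hζ.le (hψ n))
      ring_nf at h ⊢
      linarith
    push_cast
    linarith [hA, hB, hC]
end

section
/- Let H be a d×d real symmetric matrix with eigenvalue λ < 0 and corresponding unit eigenvector e, let η > 0 with η‖H‖₂ < 1, and ζ ∈ (0,1). Consider the 2d×2d block matrix A = [[(1+ζ)(I-ηH), -ζ(I-ηH)], [I, 0]]. Then μ = ½[(1+ζ)(1-ηλ) + √((1+ζ)²(1-ηλ)² - 4ζ(1-ηλ))] is real, μ > 1, and the vector (e, (1/μ)e) ∈ ℝ^{2d} is an eigenvector of A with eigenvalue μ. -/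
/-- Eigen-structure of the augmented NAG matrix
`A = [[(1+ζ)(I-ηH), -ζ(I-ηH)], [I, 0]]` at a negative eigenvalue `λ < 0` of `H`. -/
theorem nag_block_matrix_eigenpair {d : ℕ} (hd : 0 < d)
    (H : Matrix (Fin d) (Fin d) ℝ) (hH : H.IsHermitian)
    (l η ζ : ℝ) (hl : l < 0) (hη : 0 < η)
    (hηH : η * ‖Matrix.toEuclideanCLM (𝕜 := ℝ) H‖ < 1)
    (hζ : ζ ∈ Set.Ioo (0 : ℝ) 1)
    (e : Fin d → ℝ) (he : ∑ i, e i ^ 2 = 1)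
    (heig : H.mulVec e = l • e)
    (A : Matrix (Fin d ⊕ Fin d) (Fin d ⊕ Fin d) ℝ)
    (hA : A = Matrix.fromBlocks
      ((1 + ζ) • ((1 : Matrix (Fin d) (Fin d) ℝ) - η • H))
      ((-ζ) • ((1 : Matrix (Fin d) (Fin d) ℝ) - η • H))
      (1 : Matrix (Fin d) (Fin d) ℝ) (0 : Matrix (Fin d) (Fin d) ℝ))
    (μ : ℝ)
    (hμ : μ = (1 / 2) * ((1 + ζ) * (1 - η * l) +
      Real.sqrt ((1 + ζ) ^ 2 * (1 - η * l) ^ 2 - 4 * ζ * (1 - η * l)))) :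
    0 ≤ (1 + ζ) ^ 2 * (1 - η * l) ^ 2 - 4 * ζ * (1 - η * l) ∧
      1 < μ ∧
      A.mulVec (Sum.elim e (μ⁻¹ • e)) = μ • Sum.elim e (μ⁻¹ • e) := by

  obtain ⟨hζ0, hζ1⟩ := hζ
  have hs1 : 1 < 1 - η * l := by nlinarith
  have hs0 : (0:ℝ) < 1 - η * l := by linarith
  have hkey1 : 0 ≤ (1 - η * l) * (1 - ζ) ^ 2 := by positivity
  have hkey2 : 0 ≤ (1 - η * l) * ((1 + ζ) ^ 2 * ((1 - η * l) - 1)) := by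
    apply mul_nonneg hs0.le; apply mul_nonneg (sq_nonneg _); linarith
  have hD : 0 ≤ (1 + ζ) ^ 2 * (1 - η * l) ^ 2 - 4 * ζ * (1 - η * l) := by nlinarith
  have hsq := Real.sq_sqrt hD
  have hnn := Real.sqrt_nonneg ((1 + ζ) ^ 2 * (1 - η * l) ^ 2 - 4 * ζ * (1 - η * l))
  have hge : 1 - ζ ≤ Real.sqrt ((1 + ζ) ^ 2 * (1 - η * l) ^ 2 - 4 * ζ * (1 - η * l)) := by
    rw [show (1 - ζ) = Real.sqrt ((1 - ζ) ^ 2) from (Real.sqrt_sq (by linarith)).symm]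
    apply Real.sqrt_le_sqrt
    nlinarith [hkey2]
  have hμ1 : 1 < μ := by rw [hμ]; nlinarith
  have hμ0 : μ ≠ 0 := by linarith
  have hquad : μ ^ 2 = (1 + ζ) * (1 - η * l) * μ - ζ * (1 - η * l) := by
    rw [hμ]; nlinarith [hsq, hnn]
  have hMe : ((1 : Matrix (Fin d) (Fin d) ℝ) - η • H).mulVec e = (1 - η * l) • e := by
    rw [Matrix.sub_mulVec, Matrix.one_mulVec, Matrix.smul_mulVec, heig]
    funext i; simp [smul_smul]; ring
  have hscal : (1 + ζ) * (1 - η * l) - ζ * (μ⁻¹ * (1 - η * l)) = μ := by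
    field_simp
    linear_combination (-1 : ℝ) * hquad
  refine ⟨hD, hμ1, ?_⟩
  rw [hA, Matrix.fromBlocks_mulVec]
  funext i
  cases i with
  | inl i =>
      simp [neg_smul, Matrix.neg_mulVec, Matrix.smul_mulVec, Matrix.mulVec_smul, hMe,
        smul_smul]
      linear_combination e i * hscal
  | inr i =>
      simp [Matrix.one_mulVec, smul_smul]
      rw [← mul_assoc, mul_inv_cancel₀ hμ0, one_mul]
end

section
/- Let λ < 0, η > 0 with ηλ ≥ -1, γ > 0 satisfying ηλ ≤ -ηγ and ηγ ≤ 1, and set ζ = 1 - √(ηγ). Then μ = ½[(1+ζ)(1-ηλ) + √((1+ζ)²(1-ηλ)² - 4ζ(1-ηλ))] satisfies μ ≥ 1 + √(ηγ)/2. -/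
/-- With `ζ = 1 - √(ηγ)`, the larger root of the NAG characteristic
quadratic at a negative eigenvalue satisfies `μ ≥ 1 + √(ηγ)/2`. -/
theorem nag_root_lower_bound (l η γ ζ μ : ℝ)
    (hl : l < 0) (hη : 0 < η) (hγ : 0 < γ)
    (hηl : -1 ≤ η * l) (hle : η * l ≤ -(η * γ)) (hηγ : η * γ ≤ 1)
    (hζ : ζ = 1 - Real.sqrt (η * γ))
    (hμ : μ = (1 / 2) * ((1 + ζ) * (1 - η * l) +
      Real.sqrt ((1 + ζ) ^ 2 * (1 - η * l) ^ 2 - 4 * ζ * (1 - η * l)))) :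
    1 + Real.sqrt (η * γ) / 2 ≤ μ := by
  set s := Real.sqrt (η * γ) with hs
  have hηγ0 : 0 < η * γ := mul_pos hη hγ
  have hs0 : 0 < s := Real.sqrt_pos.mpr hηγ0
  have hs1 : s ≤ 1 := Real.sqrt_le_one.mpr hηγ
  have hs2 : s ^ 2 = η * γ := Real.sq_sqrt hηγ0.le
  set a := 1 - η * l with ha
  have ha1 : 1 + s ^ 2 ≤ a := by rw [hs2]; simp only [ha]; linarith
  have ha2 : a ≤ 2 := by simp only [ha]; linarith
  set D := (1 + ζ) ^ 2 * a ^ 2 - 4 * ζ * a with hD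
  by_cases hc : 2 * (1 + s / 2) ≤ (1 + ζ) * a
  · have h := Real.sqrt_nonneg D
    rw [hμ]; linarith
  · push_neg at hc
    have hy : (0:ℝ) ≤ 2 * (1 + s / 2) - (1 + ζ) * a := by linarith
    have key : (2 * (1 + s / 2) - (1 + ζ) * a) ^ 2 ≤ D := by
      rw [hD, hζ]
      nlinarith [mul_nonneg hs0.le hs0.le, sq_nonneg s, sq_nonneg (1 - s),
        mul_nonneg (mul_nonneg hs0.le hs0.le) (sub_nonneg.mpr hs1),
        mul_nonneg (sub_nonneg.mpr ha1) (by nlinarith : (0:ℝ) ≤ 1 + s - s ^ 2 / 2)]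
    have h2 : 2 * (1 + s / 2) - (1 + ζ) * a ≤ Real.sqrt D := by
      exact (Real.le_sqrt hy (le_trans (sq_nonneg _) key)).mpr key
    rw [hμ]; linarith
end

section
/- Let λ > 0, η > 0 with ηλ < 1, and ζ ∈ (0,1). Then both roots of the quadratic μ² - (1+ζ)(1-ηλ)μ + ζ(1-ηλ) = 0 have modulus strictly less than 1 (as complex numbers). -/
/-!
This is the Schur–Cohn (Jury) test for a real monic quadratic `z² - b z + c`: if `c < 1` and
`|b| < 1 + c`, all its roots lie in the open unit disc. A non-real root `μ` has `Re μ = b / 2`, and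
then the real part of the equation reads `|μ|² = c`. A real root `x` cannot satisfy `|x| ≥ 1`,
because the quadratic is positive at `±1` and its vertex `b / 2` lies in `(-1, 1)`. For the
theorem, `b = (1 + ζ)(1 - ηλ)` and `c = ζ(1 - ηλ)`, and `|b| < 1 + c` amounts to `ηλ > 0`.
-/

section SchurCohn

variable {b c : ℝ}

theorem abs_lt_one_of_sq_sub_mul_add_eq_zero (hc : c < 1) (hb : |b| < 1 + c) {x : ℝ}
    (hx : x ^ 2 - b * x + c = 0) : |x| < 1 := by
  obtain ⟨hb₁, hb₂⟩ := abs_lt.mp hb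
  refine abs_lt.mpr ⟨?_, ?_⟩
  · by_contra! hle
    nlinarith [mul_nonneg (by linarith : (0 : ℝ) ≤ -1 - x) (by linarith : (0 : ℝ) ≤ 1 - x + b)]
  · by_contra! hge
    nlinarith [mul_nonneg (by linarith : (0 : ℝ) ≤ x - 1) (by linarith : (0 : ℝ) ≤ x + 1 - b)]

theorem Complex.norm_lt_one_of_sq_sub_mul_add_eq_zero (hc : c < 1) (hb : |b| < 1 + c) {μ : ℂ}
    (hμ : μ ^ 2 - b * μ + c = 0) : ‖μ‖ < 1 := by
  have hre : μ.re ^ 2 - μ.im ^ 2 - b * μ.re + c = 0 := by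
    simpa [pow_two] using congrArg Complex.re hμ
  have him : μ.im * (2 * μ.re - b) = 0 := by
    have := congrArg Complex.im hμ
    simp only [pow_two, Complex.sub_im, Complex.add_im, Complex.mul_im, Complex.ofReal_re,
      Complex.ofReal_im, Complex.zero_im] at this
    linarith
  rcases mul_eq_zero.mp him with himz | hvertex
  · have hμre : μ = (μ.re : ℂ) := Complex.ext rfl (by simpa using himz)
    rw [hμre, Complex.norm_real, Real.norm_eq_abs]
    exact abs_lt_one_of_sq_sub_mul_add_eq_zero hc hb (by simpa [himz] using hre)
  · have hnormSq : Complex.normSq μ = c := by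
      rw [Complex.normSq_apply]
      linear_combination -hre + μ.re * hvertex
    rw [← sq_lt_one_iff₀ (norm_nonneg μ), Complex.sq_norm, hnormSq]
    exact hc

end SchurCohn

/-- For `λ > 0` with `ηλ < 1` and `ζ ∈ (0,1)`, both complex roots of
`μ² - (1+ζ)(1-ηλ)μ + ζ(1-ηλ) = 0` have modulus strictly less than `1`. -/
theorem nag_roots_modulus_lt_one (l η ζ : ℝ)
    (hl : 0 < l) (hη : 0 < η) (hηl : η * l < 1)
    (hζ : ζ ∈ Set.Ioo (0 : ℝ) 1) :
    ∀ μ : ℂ, μ ^ 2 - (((1 + ζ) * (1 - η * l) : ℝ) : ℂ) * μ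
        + (((ζ * (1 - η * l) : ℝ)) : ℂ) = 0 → ‖μ‖ < 1 := by
  intro μ hμ
  obtain ⟨hζ₀, hζ₁⟩ := hζ
  have ht₀ : 0 < 1 - η * l := by linarith
  have ht₁ : 1 - η * l < 1 := by linarith [mul_pos hη hl]
  refine Complex.norm_lt_one_of_sq_sub_mul_add_eq_zero ?_ ?_ hμ
  · nlinarith [mul_lt_mul'' hζ₁ ht₁ hζ₀.le ht₀.le]
  · rw [abs_of_pos (by positivity)]
    nlinarith
end

section
/- Let f̂ : ℝ^d → ℝ be differentiable with L₁-Lipschitz gradient, η ∈ (0, 1/L₁), γ > 0 with ηγ ≤ 1/4, and ζ = 1 - √(ηγ). Consider Nesterov's accelerated gradient iterates y_{τ+1} = u_τ - η∇f̂(u_τ), u_{τ+1} = y_{τ+1} + ζ(y_{τ+1} - y_τ). Suppose that at step τ the condition f̂(y_τ) ≥ f̂(u_τ) + ∇f̂(u_τ)ᵀ(y_τ - u_τ) - (γ/2)‖y_τ - u_τ‖² holds. Then f̂(y_{τ+1}) + (1/(2η))‖y_{τ+1} - y_τ‖² ≤ f̂(y_τ) + (1/(2η))‖y_τ - y_{τ-1}‖²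 - (√(ηγ)/(2η))‖y_τ - y_{τ-1}‖². -/
open scoped RealInnerProductSpace

/-!
The gradient step from `u` decreases `f̂` by at least `η/2 ‖∇f̂(u)‖²` (descent lemma, `ηL₁ ≤ 1`),
and the approximate-convexity condition bounds `f̂(u)` by `f̂(y)` plus a first-order term and
`γ/2 ‖u - y‖²`. Expanding `‖y⁺ - y‖² = ‖(u - y) - η∇f̂(u)‖²`, the gradient terms cancel and what is
left is `(1 + ηγ)/(2η) ‖u - y‖² = (1 + ηγ) ζ²/(2η) ‖y - y⁻‖²`; finally `(1 + ηγ) ζ² ≤ 1 - √(ηγ)`.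
-/

section

variable {E : Type*} [NormedAddCommGroup E] [InnerProductSpace ℝ E] [CompleteSpace E]

theorem HasGradientAt.hasDerivAt_comp_add_smul {f : E → ℝ} {f' x v : E} {t : ℝ}
    (hf : HasGradientAt f f' (x + t • v)) :
    HasDerivAt (fun t : ℝ ↦ f (x + t • v)) ⟪f', v⟫ t := by
  have hline : HasDerivAt (fun t : ℝ ↦ x + t • v) v t := by
    simpa using ((hasDerivAt_id t).smul_const v).const_add x
  simpa [Function.comp_def] using hf.hasFDerivAt.comp_hasDerivAt t hline

theorem le_add_inner_add_sq_of_lipschitz_gradient {f : E → ℝ} {g : E → E} {L : ℝ}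
    (hgrad : ∀ x, HasGradientAt f (g x) x) (hlip : ∀ x y, ‖g x - g y‖ ≤ L * ‖x - y‖)
    (x y : E) :
    f y ≤ f x + ⟪g x, y - x⟫ + L / 2 * ‖y - x‖ ^ 2 := by
  set v := y - x
  let φ : ℝ → ℝ := fun t ↦ f (x + t • v) - t * ⟪g x, v⟫ - L / 2 * t ^ 2 * ‖v‖ ^ 2
  have hφ (t : ℝ) : HasDerivAt φ (⟪g (x + t • v) - g x, v⟫ - L * t * ‖v‖ ^ 2) t := by
    refine (((hgrad (x + t • v)).hasDerivAt_comp_add_smul.sub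
      ((hasDerivAt_id t).mul_const ⟪g x, v⟫)).sub
      (((hasDerivAt_pow 2 t).const_mul (L / 2)).mul_const (‖v‖ ^ 2))).congr_deriv ?_
    rw [inner_sub_left]; push_cast; ring
  have hφ'_nonpos : ∀ t ∈ interior (Set.Ici (0 : ℝ)),
      ⟪g (x + t • v) - g x, v⟫ - L * t * ‖v‖ ^ 2 ≤ 0 := by
    intro t ht
    rw [interior_Ici, Set.mem_Ioi] at ht
    have hg : ‖g (x + t • v) - g x‖ ≤ L * (t * ‖v‖) := by
      simpa [norm_smul, abs_of_pos ht] using hlip (x + t • v) x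
    nlinarith [real_inner_le_norm (g (x + t • v) - g x) v, norm_nonneg v]
  have hanti : AntitoneOn φ (Set.Ici 0) :=
    antitoneOn_of_hasDerivWithinAt_nonpos (convex_Ici 0)
      (HasDerivAt.continuousOn fun t _ ↦ hφ t) (fun t _ ↦ (hφ t).hasDerivWithinAt) hφ'_nonpos
  have hφ₁ : φ 1 ≤ φ 0 := hanti Set.self_mem_Ici (Set.mem_Ici.2 zero_le_one) zero_le_one
  simp only [φ, v, one_smul, zero_smul, add_sub_cancel, add_zero, one_mul, one_pow, mul_one,
    zero_mul, ne_eq, OfNat.ofNat_ne_zero, not_false_eq_true, zero_pow, mul_zero, sub_zero] at hφ₁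
  linarith

theorem le_sub_sq_norm_of_gradient_step {f : E → ℝ} {g : E → E} {L η : ℝ}
    (hgrad : ∀ x, HasGradientAt f (g x) x) (hlip : ∀ x y, ‖g x - g y‖ ≤ L * ‖x - y‖)
    (hη : 0 ≤ η) (hηL : η * L ≤ 1) (x : E) :
    f (x - η • g x) ≤ f x - η / 2 * ‖g x‖ ^ 2 := by
  have hdesc := le_add_inner_add_sq_of_lipschitz_gradient hgrad hlip x (x - η • g x)
  rw [sub_sub_cancel_left, inner_neg_right, real_inner_smul_right, real_inner_self_eq_norm_sq,
    norm_neg, norm_smul, Real.norm_of_nonneg hη] at hdesc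
  nlinarith [mul_le_mul_of_nonneg_left hηL (mul_nonneg hη (sq_nonneg ‖g x‖))]

end

theorem one_add_mul_one_sub_sqrt_sq_le {t : ℝ} (ht : t ≤ 1) :
    (1 + t) * (1 - √t) ^ 2 ≤ 1 - √t := by
  rcases lt_or_ge t 0 with ht₀ | ht₀
  · rw [Real.sqrt_eq_zero'.2 ht₀.le]
    linarith
  · have hs : √t ^ 2 = t := Real.sq_sqrt ht₀
    have hs₁ : √t ≤ 1 := Real.sqrt_le_one.2 ht
    -- `(1 - s) - (1 + s²)(1 - s)² = s (1 - s) (1 - s + s²)` with `s = √t`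
    nlinarith [mul_nonneg (mul_nonneg (Real.sqrt_nonneg t) (sub_nonneg.2 hs₁))
      (by nlinarith : 0 ≤ 1 - √t + √t ^ 2)]

theorem nag_lyapunov_decrease_general {d : ℕ}
    (fhat : EuclideanSpace ℝ (Fin d) → ℝ)
    (g : EuclideanSpace ℝ (Fin d) → EuclideanSpace ℝ (Fin d))
    (L₁ η γ ζ : ℝ) (hL₁ : 0 < L₁)
    (hgrad : ∀ x, HasGradientAt fhat (g x) x)
    (hlip : ∀ x y, ‖g x - g y‖ ≤ L₁ * ‖x - y‖)
    (hη : 0 < η) (hη' : η < 1 / L₁)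
    (hηγ : η * γ ≤ 1 / 4)
    (hζ : ζ = 1 - Real.sqrt (η * γ))
    (yprev y u ynext : EuclideanSpace ℝ (Fin d))
    (hmom : u - y = ζ • (y - yprev))
    (hynext : ynext = u - η • g u)
    (hcond : fhat y ≥ fhat u + ⟪g u, y - u⟫ - γ / 2 * ‖y - u‖ ^ 2) :
    fhat ynext + 1 / (2 * η) * ‖ynext - y‖ ^ 2
      ≤ fhat y + 1 / (2 * η) * ‖y - yprev‖ ^ 2
        - Real.sqrt (η * γ) / (2 * η) * ‖y - yprev‖ ^ 2 := by
  have hηL : η * L₁ ≤ 1 := by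
    rw [lt_div_iff₀ hL₁] at hη'
    linarith
  have hstep : fhat ynext ≤ fhat u - η / 2 * ‖g u‖ ^ 2 :=
    hynext ▸ le_sub_sq_norm_of_gradient_step hgrad hlip hη.le hηL u
  have hconv : fhat u ≤ fhat y + ⟪g u, u - y⟫ + γ / 2 * ‖u - y‖ ^ 2 := by
    rw [← neg_sub u y, inner_neg_right, norm_neg] at hcond
    linarith
  have hdist : 1 / (2 * η) * ‖ynext - y‖ ^ 2
      = ‖u - y‖ ^ 2 / (2 * η) - ⟪g u, u - y⟫ + η / 2 * ‖g u‖ ^ 2 := by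
    rw [hynext, sub_right_comm, norm_sub_sq_real, real_inner_smul_right, real_inner_comm,
      norm_smul, Real.norm_of_nonneg hη.le]
    field_simp
  have hmomsq : ‖u - y‖ ^ 2 = ζ ^ 2 * ‖y - yprev‖ ^ 2 := by
    rw [hmom, norm_smul, mul_pow, Real.norm_eq_abs, sq_abs]
  have hkey : (1 + η * γ) * ζ ^ 2 ≤ 1 - √(η * γ) :=
    hζ ▸ one_add_mul_one_sub_sqrt_sq_le (t := η * γ) (by linarith)
  calc fhat ynext + 1 / (2 * η) * ‖ynext - y‖ ^ 2
      ≤ fhat y + ‖u - y‖ ^ 2 / (2 * η) + γ / 2 * ‖u - y‖ ^ 2 := by linarith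
    _ = fhat y + (1 + η * γ) * ζ ^ 2 / (2 * η) * ‖y - yprev‖ ^ 2 := by
      rw [hmomsq]
      field_simp
      ring
    _ ≤ fhat y + (1 - √(η * γ)) / (2 * η) * ‖y - yprev‖ ^ 2 := by gcongr
    _ = _ := by ring

/-- One-step Lyapunov decrease for Nesterov's accelerated gradient
iterates when the approximate-convexity condition holds at step `τ`. -/
theorem nag_lyapunov_decrease {d : ℕ}
    (fhat : EuclideanSpace ℝ (Fin d) → ℝ)
    (g : EuclideanSpace ℝ (Fin d) → EuclideanSpace ℝ (Fin d))
    (L₁ η γ ζ : ℝ) (hL₁ : 0 < L₁)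
    (hgrad : ∀ x, HasGradientAt fhat (g x) x)
    (hlip : ∀ x y, ‖g x - g y‖ ≤ L₁ * ‖x - y‖)
    (hη : 0 < η) (hη' : η < 1 / L₁)
    (hγ : 0 < γ) (hηγ : η * γ ≤ 1 / 4)
    (hζ : ζ = 1 - Real.sqrt (η * γ))
    (yprev y u ynext : EuclideanSpace ℝ (Fin d))
    (hmom : u - y = ζ • (y - yprev))
    (hynext : ynext = u - η • g u)
    (hcond : fhat y ≥ fhat u + ⟪g u, y - u⟫ - γ / 2 * ‖y - u‖ ^ 2) :
    fhat ynext + 1 / (2 * η) * ‖ynext - y‖ ^ 2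
      ≤ fhat y + 1 / (2 * η) * ‖y - yprev‖ ^ 2
        - Real.sqrt (η * γ) / (2 * η) * ‖y - yprev‖ ^ 2 :=
  nag_lyapunov_decrease_general fhat g L₁ η γ ζ hL₁ hgrad hlip hη hη' hηγ hζ yprev y u ynext hmom
    hynext hcond
end

section
/- Let f : ℝ^d → ℝ be twice differentiable with L₂-Lipschitz continuous Hessian; fix x ∈ ℝ^d and define f̂(u) = f(x+u) - f(x) - ∇f(x)ᵀu. Suppose y, u ∈ ℝ^d with y ≠ u satisfy f̂(y) < f̂(u) + ∇f̂(u)ᵀ(y - u) - (γ/2)‖y - u‖², and suppose L₂(‖u‖ + ‖y‖) ≤ γ/2. Then (y-u)ᵀ∇²f(x)(y-u)/‖y-u‖² ≤ -γ/2. -/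
/-!
Along the segment `t ↦ x + u + t • (y - u)`, every point lies within `‖u‖ + ‖y‖` of `x`, so by
the Lipschitz bound the curvature `⟪H(·) v, v⟫` in direction `v = y - u` stays above
`⟪H x v, v⟫ - L₂ (‖u‖ + ‖y‖) ‖v‖²`. Integrating twice gives a second-order Taylor lower bound
for `f (x + y)`; comparing it with the assumed strict upper bound forces
`⟪H x v, v⟫ < -γ ‖v‖² + L₂ (‖u‖ + ‖y‖) ‖v‖² ≤ -(γ / 2) ‖v‖²`.
-/

open scoped RealInnerProductSpace
open Set

theorem le_image_one_of_le_second_deriv {φ φ' φ'' : ℝ → ℝ} {m : ℝ}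
    (hφ : ∀ t, HasDerivAt φ (φ' t) t) (hφ' : ∀ t, HasDerivAt φ' (φ'' t) t)
    (hm : ∀ t ∈ Icc (0 : ℝ) 1, m ≤ φ'' t) :
    φ 0 + φ' 0 + m / 2 ≤ φ 1 := by
  have hslope : ∀ t ∈ Icc (0 : ℝ) 1, φ' 0 + m * t ≤ φ' t := fun t ht => by
    have hmvt := (convex_Icc (0 : ℝ) 1).mul_sub_le_image_sub_of_le_deriv
      (fun s _ => (hφ' s).continuousAt.continuousWithinAt)
      (fun s _ => (hφ' s).differentiableAt.differentiableWithinAt)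
      (fun s hs => (hφ' s).deriv ▸ hm s (interior_subset hs))
      0 (left_mem_Icc.2 zero_le_one) t ht ht.1
    linarith
  have hψ : ∀ t, HasDerivAt (fun t => φ t - φ' 0 * t - m / 2 * t ^ 2) (φ' t - φ' 0 - m * t) t :=
    fun t => (((hφ t).sub ((hasDerivAt_id' t).const_mul (φ' 0))).sub
        ((hasDerivAt_pow 2 t).const_mul (m / 2))).congr_deriv (by ring)
  have hmono := monotoneOn_of_hasDerivWithinAt_nonneg (convex_Icc (0 : ℝ) 1)
    (fun t _ => (hψ t).continuousAt.continuousWithinAt) (fun t _ => (hψ t).hasDerivWithinAt)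
    (fun t ht => sub_nonneg.2 (by linarith [hslope t (interior_subset ht)]))
  have hends := hmono (left_mem_Icc.2 zero_le_one) (right_mem_Icc.2 zero_le_one) zero_le_one
  simp only at hends
  linarith

section InnerProductSpace

variable {E : Type*} [NormedAddCommGroup E] [InnerProductSpace ℝ E]

theorem HasGradientAt.hasDerivAt_comp_line [CompleteSpace E] {f : E → ℝ} {g' a v : E} {t : ℝ}
    (hf : HasGradientAt f g' (a + t • v)) :
    HasDerivAt (fun s : ℝ => f (a + s • v)) ⟪g', v⟫ t := by
  have hcomp := hf.hasFDerivAt.comp_hasDerivAt t (((hasDerivAt_id t).smul_const v).const_add a)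
  simp only [InnerProductSpace.toDual_apply_apply, id, one_smul] at hcomp
  exact hcomp

theorem HasFDerivAt.hasDerivAt_inner_comp_line {g : E → E} {H' : E →L[ℝ] E} {a v : E} {t : ℝ}
    (hg : HasFDerivAt g H' (a + t • v)) :
    HasDerivAt (fun s : ℝ => ⟪g (a + s • v), v⟫) ⟪H' v, v⟫ t := by
  have hcomp := hg.comp_hasDerivAt t (((hasDerivAt_id t).smul_const v).const_add a)
  simpa using hcomp.inner ℝ (hasDerivAt_const t v)

theorem ContinuousLinearMap.real_inner_apply_self_le (T : E →L[ℝ] E) (v : E) :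
    ⟪T v, v⟫ ≤ ‖T‖ * ‖v‖ ^ 2 :=
  calc ⟪T v, v⟫ ≤ ‖T v‖ * ‖v‖ := real_inner_le_norm _ _
    _ ≤ ‖T‖ * ‖v‖ * ‖v‖ := by gcongr; exact T.le_opNorm v
    _ = ‖T‖ * ‖v‖ ^ 2 := by ring

theorem norm_one_sub_smul_add_smul_le {u y : E} {t : ℝ} (ht : t ∈ Icc (0 : ℝ) 1) :
    ‖(1 - t) • u + t • y‖ ≤ ‖u‖ + ‖y‖ := by
  obtain ⟨ht0, ht1⟩ := ht
  calc ‖(1 - t) • u + t • y‖ ≤ (1 - t) * ‖u‖ + t * ‖y‖ := by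
        grw [norm_add_le, norm_smul, norm_smul, Real.norm_of_nonneg (by linarith),
          Real.norm_of_nonneg ht0]
    _ ≤ ‖u‖ + ‖y‖ := by nlinarith [norm_nonneg u, norm_nonneg y]

theorem taylor_lower_bound_of_lipschitz_hessian [CompleteSpace E] {f : E → ℝ} {g : E → E}
    {H : E → E →L[ℝ] E} {L : ℝ} (hL : 0 ≤ L) (hgrad : ∀ a, HasGradientAt f (g a) a)
    (hhess : ∀ a, HasFDerivAt g (H a) a) (hlip : ∀ a b, ‖H a - H b‖ ≤ L * ‖a - b‖) (x u y : E) :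
    f (x + u) + ⟪g (x + u), y - u⟫ + (⟪H x (y - u), y - u⟫ - L * (‖u‖ + ‖y‖) * ‖y - u‖ ^ 2) / 2
      ≤ f (x + y) := by
  set v := y - u
  have hcurv : ∀ t ∈ Icc (0 : ℝ) 1,
      ⟪H x v, v⟫ - L * (‖u‖ + ‖y‖) * ‖v‖ ^ 2 ≤ ⟪H (x + u + t • v) v, v⟫ := by
    intro t ht
    have hdist : ‖x - (x + u + t • v)‖ ≤ ‖u‖ + ‖y‖ := by
      have hseg : x - (x + u + t • v) = -((1 - t) • u + t • y) := by module
      rw [hseg, norm_neg]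
      exact norm_one_sub_smul_add_smul_le ht
    have hdiff := (H x - H (x + u + t • v)).real_inner_apply_self_le v
    rw [sub_apply, inner_sub_left] at hdiff
    calc ⟪H x v, v⟫ - L * (‖u‖ + ‖y‖) * ‖v‖ ^ 2
        ≤ ⟪H x v, v⟫ - ‖H x - H (x + u + t • v)‖ * ‖v‖ ^ 2 := by grw [hlip, hdist]
      _ ≤ ⟪H (x + u + t • v) v, v⟫ := by linarith
  simpa [v] using le_image_one_of_le_second_deriv (fun t => (hgrad _).hasDerivAt_comp_line)
    (fun t => (hhess _).hasDerivAt_inner_comp_line) hcurv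

end InnerProductSpace

theorem momentum_difference_is_nc_general {d : ℕ}
    (f : EuclideanSpace ℝ (Fin d) → ℝ)
    (g : EuclideanSpace ℝ (Fin d) → EuclideanSpace ℝ (Fin d))
    (H : EuclideanSpace ℝ (Fin d) → EuclideanSpace ℝ (Fin d) →L[ℝ] EuclideanSpace ℝ (Fin d))
    (L₂ γ : ℝ) (hL₂ : 0 < L₂)
    (hgrad : ∀ a, HasGradientAt f (g a) a)
    (hhess : ∀ a, HasFDerivAt g (H a) a)
    (hlip : ∀ a b, ‖H a - H b‖ ≤ L₂ * ‖a - b‖)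
    (x y u : EuclideanSpace ℝ (Fin d)) (hyu : y ≠ u)
    (hcond : (f (x + y) - f x - ⟪g x, y⟫)
      < (f (x + u) - f x - ⟪g x, u⟫) + ⟪g (x + u) - g x, y - u⟫
        - γ / 2 * ‖y - u‖ ^ 2)
    (hsmall : L₂ * (‖u‖ + ‖y‖) ≤ γ / 2) :
    ⟪H x (y - u), y - u⟫ / ‖y - u‖ ^ 2 ≤ -γ / 2 := by
  have htaylor := taylor_lower_bound_of_lipschitz_hessian hL₂.le hgrad hhess hlip x u y
  have hpos : 0 < ‖y - u‖ ^ 2 := pow_pos (norm_pos_iff.2 (sub_ne_zero.2 hyu)) 2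
  have hcorrection : L₂ * (‖u‖ + ‖y‖) * ‖y - u‖ ^ 2 ≤ γ / 2 * ‖y - u‖ ^ 2 := by gcongr
  rw [inner_sub_left, inner_sub_right (g x)] at hcond
  rw [div_le_iff₀ hpos]
  linarith

/-- If the momentum difference certifies strong non-convexity of `f̂`
and `L₂(‖u‖ + ‖y‖) ≤ γ/2`, then `y - u` is a negative-curvature direction of
`∇²f(x)` with Rayleigh quotient at most `-γ/2`. -/
theorem momentum_difference_is_nc {d : ℕ}
    (f : EuclideanSpace ℝ (Fin d) → ℝ)
    (g : EuclideanSpace ℝ (Fin d) → EuclideanSpace ℝ (Fin d))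
    (H : EuclideanSpace ℝ (Fin d) → EuclideanSpace ℝ (Fin d) →L[ℝ] EuclideanSpace ℝ (Fin d))
    (L₂ γ : ℝ) (hL₂ : 0 < L₂) (hγ : 0 < γ)
    (hgrad : ∀ a, HasGradientAt f (g a) a)
    (hhess : ∀ a, HasFDerivAt g (H a) a)
    (hlip : ∀ a b, ‖H a - H b‖ ≤ L₂ * ‖a - b‖)
    (x y u : EuclideanSpace ℝ (Fin d)) (hyu : y ≠ u)
    (hcond : (f (x + y) - f x - ⟪g x, y⟫)
      < (f (x + u) - f x - ⟪g x, u⟫) + ⟪g (x + u) - g x, y - u⟫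
        - γ / 2 * ‖y - u‖ ^ 2)
    (hsmall : L₂ * (‖u‖ + ‖y‖) ≤ γ / 2) :
    ⟪H x (y - u), y - u⟫ / ‖y - u‖ ^ 2 ≤ -γ / 2 :=
  momentum_difference_is_nc_general f g H L₂ γ hL₂ hgrad hhess hlip x y u hyu hcond hsmall
end
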